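/- arXiv:2106.14140 — 3 statements merged into one kernel-verified Lean document; each statement's English description precedes it below -/
import Mathlib

section
/- Let a_1 < a_2 < ... < a_n (n ≥ 5) be real numbers such that the set of pairwise sums {a_i + a_j : i < j} has exactly 2n - 3 elements. Then the points are equally spaced, i.e., a_{k+1} - a_k is constant for 1 ≤ k ≤ n-1. -/
/-!
Let `S` be the set of sums `a i + a j` with `i < j`, and rank a real `x` by the number of elements
of `S` below it. Raising either index of a sum strictly increases it, so walking from `(0, 1)` to
`(i, j)` and on to `(n - 2, n - 1)` in unit steps gives
`i + j - 1 ≤ rank (a i + a j) ≤ #S - 1 - (2n - 3 - i - j)`, and both bounds agree when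
`#S = 2n - 3`. Hence two sums with the same index sum have the same rank, so they are equal. The
identities `a i + a (j + 1) = a (i + 1) + a j` for `i + 1 < j` equate gaps two or more apart, and
for `n ≥ 5` these link all the gaps.
-/

open Finset

theorem Finset.strictMonoOn_card_filter_lt {α : Type*} [LinearOrder α] (S : Finset α) :
    StrictMonoOn (fun x => #{s ∈ S | s < x}) S := by
  intro x hx y _ hxy
  have hsub : {s ∈ S | s < x} ⊆ {s ∈ S | s < y} := fun s hs => by
    rw [mem_filter] at hs ⊢
    exact ⟨hs.1, hs.2.trans hxy⟩
  exact card_lt_card ((ssubset_iff_of_subset hsub).mpr ⟨x, mem_filter.mpr ⟨hx, hxy⟩, by simp⟩)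

theorem Finset.card_filter_lt_lt_card {α : Type*} [LinearOrder α] {S : Finset α} {x : α}
    (hx : x ∈ S) : #{s ∈ S | s < x} < #S :=
  card_lt_card (filter_ssubset.mpr ⟨x, hx, lt_irrefl x⟩)

theorem Fin.add_sub_le_of_strictMonoOn_Icc {n : ℕ} {f : Fin n → ℕ} {i j : Fin n}
    (hij : i ≤ j) (hf : StrictMonoOn f (Set.Icc i j)) : f i + (j - i : ℕ) ≤ f j := by
  have hmaps : Set.MapsTo f (Icc i j) (Icc (f i) (f j)) := fun k hk => by
    rw [coe_Icc] at hk
    exact mem_Icc.mpr ⟨hf.monotoneOn ⟨le_rfl, hij⟩ hk hk.1, hf.monotoneOn hk ⟨hij, le_rfl⟩ hk.2⟩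
  have hcard := card_le_card_of_injOn f hmaps (by rw [coe_Icc]; exact hf.injOn)
  rw [Fin.card_Icc, Nat.card_Icc] at hcard
  omega

section PairSums

variable {n : ℕ} (a : Fin n → ℝ)

noncomputable def pairSums : Finset ℝ :=
  ((Finset.univ : Finset (Fin n × Fin n)).filter (fun p => p.1 < p.2)).image
    (fun p => a p.1 + a p.2)

noncomputable def sumRank (i j : Fin n) : ℕ :=
  #{s ∈ pairSums a | s < a i + a j}

variable {a}

theorem add_mem_pairSums {i j : Fin n} (hij : i < j) : a i + a j ∈ pairSums a :=
  mem_image.mpr ⟨(i, j), mem_filter.mpr ⟨mem_univ _, hij⟩, rfl⟩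

theorem sumRank_add_sub_le_right (ha : StrictMono a) {i j k : Fin n} (hij : i < j)
    (hjk : j ≤ k) : sumRank a i j + (k - j : ℕ) ≤ sumRank a i k := by
  refine Fin.add_sub_le_of_strictMonoOn_Icc (f := sumRank a i) hjk fun l hl m hm hlm => ?_
  exact (pairSums a).strictMonoOn_card_filter_lt (add_mem_pairSums (hij.trans_le hl.1))
    (add_mem_pairSums (hij.trans_le hm.1)) (add_lt_add_right (ha hlm) _)

theorem sumRank_add_sub_le_left (ha : StrictMono a) {i j k : Fin n} (hij : i ≤ j)
    (hjk : j < k) : sumRank a i k + (j - i : ℕ) ≤ sumRank a j k := by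
  refine Fin.add_sub_le_of_strictMonoOn_Icc (f := fun l => sumRank a l k) hij
    fun l hl m hm hlm => ?_
  exact (pairSums a).strictMonoOn_card_filter_lt (add_mem_pairSums (hl.2.trans_lt hjk))
    (add_mem_pairSums (hm.2.trans_lt hjk)) (add_lt_add_left (ha hlm) _)

variable (hS : #(pairSums a) = 2 * n - 3)
include hS

theorem sumRank_eq_of_card_pairSums (ha : StrictMono a) {i j : Fin n} (hij : i < j) :
    sumRank a i j = i + j - 1 := by
  have hn : 2 ≤ n := by omega
  let first : Fin n := ⟨0, by omega⟩
  let second : Fin n := ⟨1, by omega⟩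
  let penult : Fin n := ⟨n - 2, by omega⟩
  let last : Fin n := ⟨n - 1, by omega⟩
  have lower₁ := sumRank_add_sub_le_right ha (i := first) (j := second) (k := j)
    (Fin.lt_def.mpr one_pos) (Fin.le_def.mpr (show 1 ≤ (j : ℕ) by omega))
  have lower₂ := sumRank_add_sub_le_left ha (i := first) (j := i) (k := j)
    (Fin.le_def.mpr (Nat.zero_le _)) hij
  have upper₁ := sumRank_add_sub_le_right ha (i := i) (j := j) (k := last) hij
    (Fin.le_def.mpr (show (j : ℕ) ≤ n - 1 by omega))
  have upper₂ := sumRank_add_sub_le_left ha (i := i) (j := penult) (k := last)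
    (Fin.le_def.mpr (show (i : ℕ) ≤ n - 2 by omega))
    (Fin.lt_def.mpr (show n - 2 < n - 1 by omega))
  have top := card_filter_lt_lt_card (add_mem_pairSums (a := a) (i := penult) (j := last)
    (Fin.lt_def.mpr (show n - 2 < n - 1 by omega)))
  simp only [sumRank, first, second, penult, last] at *
  omega

theorem add_eq_add_of_card_pairSums (ha : StrictMono a) {i j k l : Fin n} (hij : i < j)
    (hkl : k < l) (hsum : (i : ℕ) + j = k + l) : a i + a j = a k + a l := by
  refine (pairSums a).strictMonoOn_card_filter_lt.injOn (add_mem_pairSums hij)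
    (add_mem_pairSums hkl) ?_
  change sumRank a i j = sumRank a k l
  rw [sumRank_eq_of_card_pairSums hS ha hij, sumRank_eq_of_card_pairSums hS ha hkl, hsum]

end PairSums

theorem stmt_3 (n : ℕ) (hn : 5 ≤ n) (a : Fin n → ℝ) (ha : StrictMono a)
    (h : (((Finset.univ : Finset (Fin n × Fin n)).filter (fun p => p.1 < p.2)).image
        (fun p => a p.1 + a p.2)).card = 2 * n - 3) :
    ∀ i j : Fin n, ∀ hi : (i : ℕ) + 1 < n, ∀ hj : (j : ℕ) + 1 < n,
      a ⟨i + 1, hi⟩ - a i = a ⟨j + 1, hj⟩ - a j := by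
  have hsum (i j k l : ℕ) (hj : j < n) (hl : l < n) (hij : i < j) (hkl : k < l)
      (hijkl : i + j = k + l) :
      a ⟨i, hij.trans hj⟩ + a ⟨j, hj⟩ = a ⟨k, hkl.trans hl⟩ + a ⟨l, hl⟩ :=
    add_eq_add_of_card_pairSums h ha (Fin.mk_lt_mk.mpr hij) (Fin.mk_lt_mk.mpr hkl) hijkl
  have gap_eq_first (k : ℕ) (hk : k + 1 < n) :
      a ⟨k + 1, hk⟩ - a ⟨k, by omega⟩ = a ⟨1, by omega⟩ - a ⟨0, by omega⟩ := by
    match k with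
    | 0 => rfl
    | 1 =>
      -- `a 0 + a 2 = 2 a 1` is not an identity between pair sums; go through index 4
      linarith [hsum 2 3 1 4 (by omega) (by omega) (by omega) (by omega) rfl,
        hsum 0 4 1 3 (by omega) (by omega) (by omega) (by omega) rfl]
    | k + 2 => linarith [hsum 0 (k + 3) 1 (k + 2) hk (by omega) (by omega) (by omega) (by omega)]
  intro i j hi hj
  rw [gap_eq_first i hi, gap_eq_first j hj]
end

section
/- For every integer n ≥ 3 and every integer k with 2n - 3 ≤ k ≤ n(n-1)/2, there exist real numbers a_1 < a_2 < ... < a_n such that the set of pairwise sums {a_i + a_j : i < j} has exactly k elements. -/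
/-!
The $m$ numbers $1, 2, \dots, m-1, t$ with $m \le t \le 2m-3$ have exactly the sums
$3, 4, \dots, t+m-1$, so they realise every count between $2m-3$ and $3m-6$. Adjoining to $n$
natural numbers one larger than the sum of any two of them adds exactly $n$ new sums; adjoining
$n - m$ such large numbers to the block of size $m$ covers the rest of the range up to
$\binom{n}{2}$.
-/

open Finset

namespace Finset

section Order

variable {α : Type*} [LinearOrder α] [Add α]

def restrictedSumset (s : Finset α) : Finset α :=
  ((s ×ˢ s).filter fun p => p.1 < p.2).image fun p => p.1 + p.2

variable {s : Finset α}

theorem mem_restrictedSumset {y : α} :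
    y ∈ s.restrictedSumset ↔ ∃ a ∈ s, ∃ b ∈ s, a < b ∧ a + b = y := by
  simp [restrictedSumset, and_assoc]

theorem restrictedSumset_image {β : Type*} [LinearOrder β] [Add β] {f : α → β}
    (hf : StrictMono f) (hadd : ∀ a b, f (a + b) = f a + f b) :
    (s.image f).restrictedSumset = s.restrictedSumset.image f := by
  ext y
  simp only [mem_restrictedSumset, mem_image]
  constructor
  · rintro ⟨_, ⟨a, ha, rfl⟩, _, ⟨b, hb, rfl⟩, hab, rfl⟩
    exact ⟨a + b, ⟨a, ha, b, hb, hf.lt_iff_lt.1 hab, rfl⟩, hadd a b⟩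
  · rintro ⟨_, ⟨a, ha, b, hb, hab, rfl⟩, rfl⟩
    exact ⟨f a, ⟨a, ha, rfl⟩, f b, ⟨b, hb, rfl⟩, hf hab, (hadd a b).symm⟩

theorem image_pairSums_eq_restrictedSumset {ι : Type*} [Fintype ι] [LinearOrder ι] {f : ι → α}
    (hf : StrictMono f) :
    ((univ : Finset (ι × ι)).filter (fun p => p.1 < p.2)).image (fun p => f p.1 + f p.2) =
      (univ.image f).restrictedSumset := by
  ext y
  simp only [mem_restrictedSumset, mem_image, mem_filter, mem_univ, true_and]
  constructor
  · rintro ⟨⟨i, j⟩, hij, rfl⟩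
    exact ⟨f i, ⟨i, rfl⟩, f j, ⟨j, rfl⟩, hf hij, rfl⟩
  · rintro ⟨_, ⟨i, rfl⟩, _, ⟨j, rfl⟩, hij, rfl⟩
    exact ⟨(i, j), hf.lt_iff_lt.1 hij, rfl⟩

theorem restrictedSumset_insert_of_forall_lt {x : α} (hx : ∀ a ∈ s, a < x) :
    (insert x s).restrictedSumset = s.restrictedSumset ∪ s.image (· + x) := by
  ext y
  simp only [mem_restrictedSumset, mem_union, mem_image, mem_insert]
  constructor
  · rintro ⟨a, rfl | ha, b, rfl | hb, hab, rfl⟩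
    · exact absurd hab (lt_irrefl _)
    · exact absurd hab (hx b hb).not_gt
    · exact Or.inr ⟨a, ha, rfl⟩
    · exact Or.inl ⟨a, ha, b, hb, hab, rfl⟩
  · rintro (⟨a, ha, b, hb, hab, rfl⟩ | ⟨a, ha, rfl⟩)
    · exact ⟨a, Or.inr ha, b, Or.inr hb, hab, rfl⟩
    · exact ⟨a, Or.inr ha, x, Or.inl rfl, hx a ha, rfl⟩

end Order

theorem card_restrictedSumset_insert {α : Type*} [AddCommMonoid α] [LinearOrder α]
    [IsOrderedCancelAddMonoid α] {s : Finset α} {x : α}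
    (hx : ∀ a ∈ s, ∀ b ∈ s, ∀ c ∈ s, a + b < c + x) :
    #(insert x s).restrictedSumset = #s.restrictedSumset + #s := by
  have hlt : ∀ a ∈ s, a < x := fun a ha => lt_of_add_lt_add_left (hx a ha a ha a ha)
  have hdisj : Disjoint s.restrictedSumset (s.image (· + x)) := by
    simp only [disjoint_left, mem_restrictedSumset, mem_image]
    rintro _ ⟨a, ha, b, hb, -, rfl⟩ ⟨c, hc, hsum⟩
    exact (hx a ha b hb c hc).ne' hsum
  rw [restrictedSumset_insert_of_forall_lt hlt, card_union_of_disjoint hdisj,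
    card_image_of_injective _ (add_left_injective x)]

theorem restrictedSumset_Icc (a b : ℕ) :
    (Icc a b).restrictedSumset = Icc (2 * a + 1) (2 * b - 1) := by
  ext y
  simp only [mem_restrictedSumset, mem_Icc]
  constructor
  · rintro ⟨i, hi, j, hj, hij, rfl⟩
    omega
  · intro hy
    by_cases hab : y ≤ a + b
    · exact ⟨a, by omega, y - a, by omega, by omega, by omega⟩
    · exact ⟨y - b, by omega, b, by omega, by omega, by omega⟩

end Finset

theorem exists_card_restrictedSumset_of_le_three_mul {m k : ℕ} (hm : 3 ≤ m)
    (hk₁ : 2 * m - 3 ≤ k) (hk₂ : k ≤ 3 * m - 6) :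
    ∃ s : Finset ℕ, #s = m ∧ #s.restrictedSumset = k := by
  set t := k + 3 - m
  have ht : t ∉ Icc 1 (m - 1) := by simp only [mem_Icc]; omega
  refine ⟨insert t (Icc 1 (m - 1)), by rw [card_insert_of_notMem ht, Nat.card_Icc]; omega, ?_⟩
  have hsums : (insert t (Icc 1 (m - 1))).restrictedSumset = Icc 3 (t + m - 1) := by
    rw [restrictedSumset_insert_of_forall_lt (fun a ha => by rw [mem_Icc] at ha; omega),
      restrictedSumset_Icc, image_add_right_Icc]
    ext y
    simp only [mem_union, mem_Icc]
    omega
  rw [hsums, Nat.card_Icc]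
  omega

theorem exists_card_insert_restrictedSumset (s : Finset ℕ) :
    ∃ x ∉ s, #(insert x s).restrictedSumset = #s.restrictedSumset + #s := by
  have hle : ∀ a ∈ s, a ≤ s.sup id := fun a ha => le_sup (f := id) ha
  refine ⟨2 * s.sup id + 1, fun hx => by have := hle _ hx; omega, ?_⟩
  refine card_restrictedSumset_insert fun a ha b hb c _ => ?_
  have := hle a ha
  have := hle b hb
  omega

theorem exists_card_restrictedSumset {n k : ℕ} (hn : 3 ≤ n) (hk₁ : 2 * n - 3 ≤ k)
    (hk₂ : k ≤ n.choose 2) : ∃ s : Finset ℕ, #s = n ∧ #s.restrictedSumset = k := by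
  induction n, hn using Nat.le_induction generalizing k with
  | base => exact exists_card_restrictedSumset_of_le_three_mul le_rfl hk₁ (by simpa using hk₂)
  | succ n hn ih =>
    by_cases hk : k ≤ 3 * (n + 1) - 6
    · exact exists_card_restrictedSumset_of_le_three_mul (by omega) hk₁ hk
    have hchoose : (n + 1).choose 2 = n.choose 2 + n := by
      rw [Nat.choose_succ_succ, Nat.choose_one_right, add_comm]
    obtain ⟨s, hs, hsums⟩ := ih (k := k - n) (by omega) (by omega)
    obtain ⟨x, hx, hcard⟩ := exists_card_insert_restrictedSumset s
    exact ⟨insert x s, by rw [card_insert_of_notMem hx, hs], by omega⟩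

theorem stmt_5 (n k : ℕ) (hn : 3 ≤ n) (hk1 : 2 * n - 3 ≤ k) (hk2 : k ≤ n * (n - 1) / 2) :
    ∃ a : Fin n → ℝ, StrictMono a ∧
      (((Finset.univ : Finset (Fin n × Fin n)).filter (fun p => p.1 < p.2)).image
        (fun p => a p.1 + a p.2)).card = k := by
  obtain ⟨s, hs, hsums⟩ := exists_card_restrictedSumset hn hk1 (by rwa [Nat.choose_two_right])
  have ha : StrictMono ((↑) ∘ s.orderEmbOfFin hs : Fin n → ℝ) :=
    Nat.strictMono_cast.comp (s.orderEmbOfFin hs).strictMono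
  refine ⟨_, ha, ?_⟩
  rw [image_pairSums_eq_restrictedSumset ha, ← image_image, image_orderEmbOfFin_univ,
    restrictedSumset_image Nat.strictMono_cast Nat.cast_add,
    card_image_of_injective _ Nat.cast_injective, hsums]
end

section
/- For integers n ≥ 2 and 1 ≤ t ≤ n - 3, the set S = {1, 2, ..., n-1, n+t} ⊂ ℝ has exactly 2n + t - 3 distinct pairwise midpoints (equivalently, 2n + t - 3 distinct pairwise sums of distinct elements). -/
theorem stmt_6 (n t : ℕ) (hn : 2 ≤ n) (ht1 : 1 ≤ t) (ht2 : t ≤ n - 3) :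
    let S : Finset ℝ := insert ((n + t : ℕ) : ℝ) ((Finset.Icc 1 (n - 1)).image (fun i : ℕ => (i : ℝ)))
    (((S ×ˢ S).filter (fun p => p.1 ≠ p.2)).image (fun p => p.1 + p.2)).card
      = 2 * n + t - 3 := by
  intro S
  have hn4 : 4 ≤ n := by omega
  have hmem : ∀ x : ℝ, x ∈ S ↔ ∃ a : ℕ, (a = n + t ∨ (1 ≤ a ∧ a ≤ n - 1)) ∧ (a : ℝ) = x := by
    intro x
    simp only [S, Finset.mem_insert, Finset.mem_image, Finset.mem_Icc]
    constructor
    · rintro (h | ⟨i, ⟨h1, h2⟩, rfl⟩)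
      · exact ⟨n + t, Or.inl rfl, h.symm⟩
      · exact ⟨i, Or.inr ⟨h1, h2⟩, rfl⟩
    · rintro ⟨a, (rfl | h), rfl⟩
      · exact Or.inl rfl
      · exact Or.inr ⟨a, h, rfl⟩
  have key : (((S ×ˢ S).filter (fun p => p.1 ≠ p.2)).image (fun p => p.1 + p.2))
      = (Finset.Icc 3 (2 * n + t - 1)).image (fun k : ℕ => (k : ℝ)) := by
    ext x
    simp only [Finset.mem_image, Finset.mem_filter, Finset.mem_product, Finset.mem_Icc]
    constructor
    · rintro ⟨⟨p1, p2⟩, ⟨⟨hp1, hp2⟩, hne⟩, rfl⟩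
      obtain ⟨a, ha, rfl⟩ := (hmem p1).1 hp1
      obtain ⟨b, hb, rfl⟩ := (hmem p2).1 hp2
      have hab : a ≠ b := fun h => hne (by simp [h])
      exact ⟨a + b, by omega, by push_cast; ring⟩
    · rintro ⟨k, hk, rfl⟩
      have : ∃ a b : ℕ, (a = n + t ∨ (1 ≤ a ∧ a ≤ n - 1)) ∧
          (b = n + t ∨ (1 ≤ b ∧ b ≤ n - 1)) ∧ a ≠ b ∧ a + b = k := by
        rcases le_or_gt k n with h | h
        · exact ⟨1, k - 1, Or.inr ⟨by omega, by omega⟩, Or.inr ⟨by omega, by omega⟩,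
            by omega, by omega⟩
        rcases le_or_gt k (2 * n - 3) with h2 | h2
        · exact ⟨k - (n - 1), n - 1, Or.inr ⟨by omega, by omega⟩, Or.inr ⟨by omega, by omega⟩,
            by omega, by omega⟩
        · exact ⟨n + t, k - (n + t), Or.inl rfl, Or.inr ⟨by omega, by omega⟩, by omega, by omega⟩
      obtain ⟨a, b, ha, hb, hab, hsum⟩ := this
      refine ⟨(a, b), ⟨⟨(hmem a).2 ⟨a, ha, rfl⟩, (hmem b).2 ⟨b, hb, rfl⟩⟩, ?_⟩, ?_⟩
      · exact fun h => hab (Nat.cast_injective h)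
      · push_cast [← hsum]; ring
  rw [key, Finset.card_image_of_injective _ Nat.cast_injective, Nat.card_Icc]
  omega
end
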